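/- For all jointly distributed random variables A, B, X, Y with finite ranges, H(A | X,B) + H(A | Y,B) ≤ H(A | B) + Γ, where Γ = log₂( Σ_{a,b,x,y : p(a,b,x)>0 and p(a,b,y)>0} p(b,x)·p(b,y)/p(b) ). -/

import Mathlib

open Finset

noncomputable section

/-- Probability of an event under a distribution on a finite sample space. -/
def pr {Ω : Type*} [Fintype Ω] (p : Ω → ℝ) (E : Set Ω) : ℝ :=
  ∑ ω, E.indicator p ω

/-- `p` is a probability mass function on the finite sample space `Ω`. -/
def IsPMF {Ω : Type*} [Fintype Ω] (p : Ω → ℝ) : Prop :=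
  (∀ ω, 0 ≤ p ω) ∧ ∑ ω, p ω = 1

/-- Shannon entropy (base 2) of a random variable `V` on a finite sample space. -/
def ent {Ω β : Type*} [Fintype Ω] [Fintype β] (p : Ω → ℝ) (V : Ω → β) : ℝ :=
  -∑ v, pr p {ω | V ω = v} * Real.logb 2 (pr p {ω | V ω = v})

/-- Conditional Shannon entropy (base 2): `H(V | W)`. -/
def condEnt {Ω β γ : Type*} [Fintype Ω] [Fintype β] [Fintype γ]
    (p : Ω → ℝ) (V : Ω → β) (W : Ω → γ) : ℝ :=
  ent p (fun ω => (V ω, W ω)) - ent p W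

/-- Mutual information (base 2): `I(V : W)`. -/
def mi {Ω β γ : Type*} [Fintype Ω] [Fintype β] [Fintype γ]
    (p : Ω → ℝ) (V : Ω → β) (W : Ω → γ) : ℝ :=
  ent p V + ent p W - ent p (fun ω => (V ω, W ω))

/-- Conditional mutual information (base 2): `I(V : W | U)`. -/
def cmi {Ω β γ δ : Type*} [Fintype Ω] [Fintype β] [Fintype γ] [Fintype δ]
    (p : Ω → ℝ) (V : Ω → β) (W : Ω → γ) (U : Ω → δ) : ℝ :=
  ent p (fun ω => (V ω, U ω)) + ent p (fun ω => (W ω, U ω))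
    - ent p (fun ω => (V ω, W ω, U ω)) - ent p U

end

/-!
Let `M(a,b,x,y) = p(a,b,x) p(a,b,y) / p(a,b)` be the coupling that makes `X` and `Y`
conditionally independent given `(A,B)`. Its `(A,B,X)`- and `(A,B,Y)`-marginals are the true
ones, so `H(A|X,B) + H(A|Y,B) - H(A|B) = ∑ M log (W / M)` with `W = p(b,x) p(b,y) / p(b)`,
and Jensen's inequality for the concave logarithm bounds this by `log ∑_{M > 0} W = Γ`.
-/

open Real

theorem sum_mul_logb_sub_le_logb_sum {ι : Type*} [Fintype ι] {b : ℝ} (hb : 1 < b)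
    {m w : ι → ℝ} (hm : ∀ i, 0 ≤ m i) (hm_sum : ∑ i, m i = 1) (hw : ∀ i, 0 < m i → 0 < w i) :
    ∑ i, m i * (logb b (w i) - logb b (m i)) ≤ logb b (∑ i, if 0 < m i then w i else 0) := by
  classical
  set s := univ.filter fun i => 0 < m i
  have supp (f : ι → ℝ) : ∑ i ∈ s, m i * f i = ∑ i, m i * f i :=
    sum_filter_of_ne fun i _ h => (hm i).lt_of_ne' (left_ne_zero_of_mul h)
  have hs : ∑ i ∈ s, m i = 1 := by simpa [hm_sum] using supp fun _ => 1
  have pos {i} (hi : i ∈ s) : 0 < m i := (mem_filter.1 hi).2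
  have jensen := strictConcaveOn_log_Ioi.concaveOn.le_map_sum (t := s) (p := fun i => w i / m i)
    (fun i _ => hm i) hs fun i hi => div_pos (hw i (pos hi)) (pos hi)
  simp only [smul_eq_mul] at jensen
  have hlogb : ∀ i ∈ s, m i * (logb b (w i) - logb b (m i)) = m i * log (w i / m i) / log b :=
    fun i hi => by rw [log_div (hw i (pos hi)).ne' (pos hi).ne', logb, logb]; ring
  rw [← supp, sum_congr rfl hlogb, ← sum_div, ← sum_filter, logb]
  refine div_le_div_of_nonneg_right ?_ (log_nonneg hb.le)
  exact jensen.trans_eq (congrArg log (sum_congr rfl fun i hi => mul_div_cancel₀ _ (pos hi).ne'))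

lemma mul_div_pos_iff_of_le {s t r : ℝ} (hs : 0 ≤ s) (ht : 0 ≤ t) (hsr : s ≤ r) :
    0 < s * t / r ↔ 0 < s ∧ 0 < t := by
  refine ⟨fun h => ⟨hs.lt_of_ne' fun h0 => ?_, ht.lt_of_ne' fun h0 => ?_⟩,
    fun ⟨hs, ht⟩ => div_pos (mul_pos hs ht) (hs.trans_le hsr)⟩ <;>
  simp [h0] at h

lemma logb_mul_div_sub_logb_mul_div {c s t r g₁ g₂ g : ℝ} (hs : s ≠ 0) (ht : t ≠ 0) (hr : r ≠ 0)
    (hg₁ : g₁ ≠ 0) (hg₂ : g₂ ≠ 0) (hg : g ≠ 0) :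
    logb c (g₁ * g₂ / g) - logb c (s * t / r) =
      (logb c g₁ - logb c s) + (logb c g₂ - logb c t) - (logb c g - logb c r) := by
  rw [logb_div (mul_ne_zero hg₁ hg₂) hg, logb_mul hg₁ hg₂, logb_div (mul_ne_zero hs ht) hr,
    logb_mul hs ht]
  ring

section Slice

variable {χ υ : Type*} [Fintype χ] [Fintype υ]

lemma sum_mul_div_eq_of_sum_eq {u : χ → ℝ} {v : υ → ℝ} {r : ℝ} (hu : ∀ x, 0 ≤ u x)
    (hu_sum : ∑ x, u x = r) (hv_sum : ∑ y, v y = r) (x : χ) :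
    ∑ y, u x * v y / r = u x := by
  rw [← sum_div, ← mul_sum, hv_sum]
  refine mul_div_cancel_of_imp fun hr => ?_
  exact (sum_eq_zero_iff_of_nonneg fun x _ => hu x).1 (hu_sum.trans hr) x (mem_univ x)

theorem sum_mul_logb_sub_add_sum_mul_logb_sub_eq {c : ℝ} {u : χ → ℝ} {v : υ → ℝ} {r : ℝ}
    {g₁ : χ → ℝ} {g₂ : υ → ℝ} {g : ℝ} (hu : ∀ x, 0 ≤ u x) (hv : ∀ y, 0 ≤ v y)
    (hu_sum : ∑ x, u x = r) (hv_sum : ∑ y, v y = r)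
    (hug : ∀ x, u x ≤ g₁ x) (hvg : ∀ y, v y ≤ g₂ y) (hrg : r ≤ g) :
    ∑ x, u x * (logb c (g₁ x) - logb c (u x)) + ∑ y, v y * (logb c (g₂ y) - logb c (v y)) =
      r * (logb c g - logb c r) +
        ∑ x, ∑ y, u x * v y / r * (logb c (g₁ x * g₂ y / g) - logb c (u x * v y / r)) := by
  have hur (x) : u x ≤ r := hu_sum ▸ single_le_sum (fun x _ => hu x) (mem_univ x)
  have hpoint (x y) : u x * v y / r * (logb c (g₁ x * g₂ y / g) - logb c (u x * v y / r)) =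
      u x * v y / r * (logb c (g₁ x) - logb c (u x)) +
        u x * v y / r * (logb c (g₂ y) - logb c (v y)) -
        u x * v y / r * (logb c g - logb c r) := by
    by_cases h : 0 < u x * v y / r
    · obtain ⟨hux, hvy⟩ := (mul_div_pos_iff_of_le (hu x) (hv y) (hur x)).1 h
      have hr := hux.trans_le (hur x)
      rw [logb_mul_div_sub_logb_mul_div hux.ne' hvy.ne' hr.ne' (hux.trans_le (hug x)).ne'
        (hvy.trans_le (hvg y)).ne' (hr.trans_le hrg).ne']
      ring
    · rw [(not_lt.1 h).antisymm (div_nonneg (mul_nonneg (hu x) (hv y)) ((hu x).trans (hur x)))]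
      ring
  have hmarg_u (x) : ∑ y, u x * v y / r = u x := sum_mul_div_eq_of_sum_eq hu hu_sum hv_sum x
  have hmarg_v (y) : ∑ x, u x * v y / r = v y := by
    simpa only [mul_comm (u _)] using sum_mul_div_eq_of_sum_eq hv hv_sum hu_sum y
  simp only [hpoint, sum_add_distrib, sum_sub_distrib, ← sum_mul, hmarg_u, hu_sum]
  rw [sum_comm (f := fun x y => u x * v y / r * _)]
  simp only [← sum_mul, hmarg_v]
  ring

end Slice

theorem sum_mul_logb_sub_add_sum_mul_logb_sub_le {α β χ υ : Type*} [Fintype α] [Fintype β]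
    [Fintype χ] [Fintype υ] {c : ℝ} (hc : 1 < c)
    {P : α → β → χ → ℝ} {Q : α → β → υ → ℝ} {R : α → β → ℝ}
    {Gx : β → χ → ℝ} {Gy : β → υ → ℝ} {G : β → ℝ}
    (hP : ∀ a b x, 0 ≤ P a b x) (hQ : ∀ a b y, 0 ≤ Q a b y)
    (hP_sum : ∀ a b, ∑ x, P a b x = R a b) (hQ_sum : ∀ a b, ∑ y, Q a b y = R a b)
    (hR_sum : ∑ a, ∑ b, R a b = 1) (hPGx : ∀ a b x, P a b x ≤ Gx b x)
    (hQGy : ∀ a b y, Q a b y ≤ Gy b y) (hRG : ∀ a b, R a b ≤ G b) :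
    (∑ a, ∑ b, ∑ x, P a b x * (logb c (Gx b x) - logb c (P a b x))) +
        ∑ a, ∑ b, ∑ y, Q a b y * (logb c (Gy b y) - logb c (Q a b y)) ≤
      (∑ a, ∑ b, R a b * (logb c (G b) - logb c (R a b))) +
        logb c (∑ a, ∑ b, ∑ x, ∑ y,
          if 0 < P a b x ∧ 0 < Q a b y then Gx b x * Gy b y / G b else 0) := by
  have hPR (a b x) : P a b x ≤ R a b :=
    hP_sum a b ▸ single_le_sum (fun x _ => hP a b x) (mem_univ x)
  have hpos (a b x y) : 0 < P a b x * Q a b y / R a b ↔ 0 < P a b x ∧ 0 < Q a b y :=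
    mul_div_pos_iff_of_le (hP a b x) (hQ a b y) (hPR a b x)
  have gibbs := sum_mul_logb_sub_le_logb_sum hc
    (m := fun i : α × β × χ × υ => P i.1 i.2.1 i.2.2.1 * Q i.1 i.2.1 i.2.2.2 / R i.1 i.2.1)
    (w := fun i => Gx i.2.1 i.2.2.1 * Gy i.2.1 i.2.2.2 / G i.2.1)
    (fun ⟨a, b, x, y⟩ =>
      div_nonneg (mul_nonneg (hP a b x) (hQ a b y)) ((hP a b x).trans (hPR a b x)))
    (by simp only [Fintype.sum_prod_type,
      sum_mul_div_eq_of_sum_eq (hP _ _) (hP_sum _ _) (hQ_sum _ _), hP_sum, hR_sum])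
    (fun ⟨a, b, x, y⟩ h => by
      obtain ⟨hPx, hQy⟩ := (hpos a b x y).1 h
      have := hPx.trans_le (hPGx a b x)
      have := hQy.trans_le (hQGy a b y)
      have := (hPx.trans_le (hPR a b x)).trans_le (hRG a b)
      positivity)
  simp only [Fintype.sum_prod_type, hpos] at gibbs
  have hslice (a b) := sum_mul_logb_sub_add_sum_mul_logb_sub_eq (c := c) (hP a b) (hQ a b)
    (hP_sum a b) (hQ_sum a b) (hPGx a b) (hQGy a b) (hRG a b)
  simp only [← sum_add_distrib, hslice]
  simp only [sum_add_distrib]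
  exact add_le_add_right gibbs _

section Probability

variable {Ω : Type*} [Fintype Ω] {p : Ω → ℝ}

lemma pr_nonneg (hp : ∀ ω, 0 ≤ p ω) (E : Set Ω) : 0 ≤ pr p E :=
  sum_nonneg fun ω _ => Set.indicator_nonneg (fun ω _ => hp ω) ω

lemma pr_mono (hp : ∀ ω, 0 ≤ p ω) {E F : Set Ω} (h : E ⊆ F) : pr p E ≤ pr p F :=
  sum_le_sum fun ω _ => Set.indicator_le_indicator_of_subset h (fun ω => hp ω) ω

lemma sum_pr_fiber_eq {β : Type*} [Fintype β] (V : Ω → β) {E : Set Ω} {F : β → Set Ω}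
    (hF : ∀ v ω, ω ∈ F v ↔ V ω = v ∧ ω ∈ E) : ∑ v, pr p (F v) = pr p E := by
  classical
  unfold pr
  rw [sum_comm]
  refine sum_congr rfl fun ω _ => ?_
  simp only [Set.indicator_apply, hF, ite_and, sum_ite_eq, mem_univ, if_true]

lemma condEnt_eq_sum {β γ : Type*} [Fintype β] [Fintype γ] (V : Ω → β) (W : Ω → γ) :
    condEnt p V W = ∑ v, ∑ w, pr p {ω | V ω = v ∧ W ω = w} *
      (logb 2 (pr p {ω | W ω = w}) - logb 2 (pr p {ω | V ω = v ∧ W ω = w})) := by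
  have hjoint : ent p (fun ω => (V ω, W ω)) = -∑ v, ∑ w, pr p {ω | V ω = v ∧ W ω = w} *
      logb 2 (pr p {ω | V ω = v ∧ W ω = w}) := by
    simp only [ent, Fintype.sum_prod_type, Prod.mk.injEq]
  have hfiber : ∀ w, ∑ v, pr p {ω | V ω = v ∧ W ω = w} = pr p {ω | W ω = w} := fun w =>
    sum_pr_fiber_eq V fun _ _ => Iff.rfl
  have hmarg : ent p W = -∑ v, ∑ w, pr p {ω | V ω = v ∧ W ω = w} *
      logb 2 (pr p {ω | W ω = w}) := by
    simp only [ent, sum_comm (γ := β), ← sum_mul, hfiber]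
  simp only [condEnt, hjoint, hmarg, mul_sub, sum_sub_distrib]
  ring

lemma condEnt_prod_eq_sum {α β χ : Type*} [Fintype α] [Fintype β] [Fintype χ]
    (A : Ω → α) (B : Ω → β) (X : Ω → χ) :
    condEnt p A (fun ω => (X ω, B ω)) =
      ∑ a, ∑ b, ∑ x, pr p {ω | A ω = a ∧ B ω = b ∧ X ω = x} *
        (logb 2 (pr p {ω | B ω = b ∧ X ω = x}) -
          logb 2 (pr p {ω | A ω = a ∧ B ω = b ∧ X ω = x})) := by
  simp only [condEnt_eq_sum, Fintype.sum_prod_type, Prod.mk.injEq]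
  refine sum_congr rfl fun a _ => sum_comm.trans (sum_congr rfl fun b _ => ?_)
  simp only [and_comm]

end Probability

open scoped Classical in
/-- Unconditional version of [KR11] with error term `Γ`. -/
theorem stmt_4 {Ω α β χ υ : Type*}
    [Fintype Ω] [Fintype α] [Fintype β] [Fintype χ] [Fintype υ]
    (p : Ω → ℝ) (hp : IsPMF p)
    (A : Ω → α) (B : Ω → β) (X : Ω → χ) (Y : Ω → υ) :
    condEnt p A (fun ω => (X ω, B ω)) + condEnt p A (fun ω => (Y ω, B ω)) ≤
      condEnt p A B +
        Real.logb 2 (∑ a : α, ∑ b : β, ∑ x : χ, ∑ y : υ,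
          if 0 < pr p {ω | A ω = a ∧ B ω = b ∧ X ω = x} ∧
             0 < pr p {ω | A ω = a ∧ B ω = b ∧ Y ω = y} then
            pr p {ω | B ω = b ∧ X ω = x} * pr p {ω | B ω = b ∧ Y ω = y}
              / pr p {ω | B ω = b}
          else 0) := by
  obtain ⟨hp_nonneg, hp_sum⟩ := hp
  have hAB : ∑ a, ∑ b, pr p {ω | A ω = a ∧ B ω = b} = 1 := calc
    _ = ∑ a, pr p {ω | A ω = a} := sum_congr rfl fun a _ => sum_pr_fiber_eq B fun _ _ => and_comm
    _ = pr p Set.univ := sum_pr_fiber_eq A fun _ _ => (and_iff_left (Set.mem_univ _)).symm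
    _ = 1 := by simpa [pr] using hp_sum
  rw [condEnt_prod_eq_sum, condEnt_prod_eq_sum, condEnt_eq_sum]
  refine sum_mul_logb_sub_add_sum_mul_logb_sub_le one_lt_two
    (fun _ _ _ => pr_nonneg hp_nonneg _) (fun _ _ _ => pr_nonneg hp_nonneg _)
    (fun _ _ => sum_pr_fiber_eq X fun _ _ => and_assoc.symm.trans and_comm)
    (fun _ _ => sum_pr_fiber_eq Y fun _ _ => and_assoc.symm.trans and_comm) hAB
    (fun _ _ _ => pr_mono hp_nonneg fun _ h => h.2)
    (fun _ _ _ => pr_mono hp_nonneg fun _ h => h.2)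
    (fun _ _ => pr_mono hp_nonneg fun _ h => h.2)
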